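/- arXiv:2505.06765 — 6 statements merged into one kernel-verified Lean document; each statement's English description precedes it below -/
import Mathlib

section
/- Let p ≥ 1 and n ≥ 1 be integers, let z_1, …, z_{p+1} ∈ ℝ^n, and let K ∈ ℝ^{(p+1)×(p+1)} be the symmetric positive-semidefinite Gram matrix with entries K_{ij} = q(z_i, z_j). Let γ ∈ ℝ^{p+1}, define the function-value vector w = Kγ ∈ ℝ^{p+1}, and suppose γᵀKγ ≤ b² for some b > 0. Let ρ > 0, let ν ∈ ℝ^p satisfy |ν_i| ≤ ρ for all i, and set Y ∈ ℝ^p with Y_i = w_i + ν_i for i = 1,…,p. Write P ∈ ℝ^{p×p} for the upper-left p×p block of K, k ∈ ℝ^p for the vector (K_{1,p+1},…,K_{p,p+1})ᵀ, and Ω = P + ρ²I_p (which is positive definite, hence invertible). Define the GP predictive mean μ = YᵀΩ⁻¹k and predictive standard deviation σ = √(K_{p+1,p+1} − kᵀΩ⁻¹k). Then |μ − w_{p+1}| ≤ √(b² − YᵀΩ⁻¹Y + p) · σ, where both quantities under the square roots are nonnegative. -/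
/-!
The posterior mean and variance are Schur complements of a single positive semidefinite form.
On pairs `(x, u)` of a coefficient vector and a noise vector put
`B((x, u), (y, v)) = xᵀ K y + ρ² uᵀ v`. The noisy observations are represented by
`eᵢ = (δᵢ, δᵢ)`, whose Gram matrix is `Ω`, the test point by `t = (δ_{p+1}, 0)` and the data by
`f = (γ, ρ⁻² ν)`, so that `B(eᵢ, f) = Yᵢ`, `B(eᵢ, t) = kᵢ` and `B(f, t) = w_{p+1}`.
Cauchy–Schwarz for the residuals of `f` and `t` after `B`-orthogonal projection onto the span
of the `eᵢ` gives `(w_{p+1} - μ)² ≤ (B(f, f) - Yᵀ Ω⁻¹ Y) σ²`, and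
`B(f, f) = γᵀ K γ + ρ⁻² |ν|² ≤ b² + p`.
-/

open Matrix

namespace LinearMap.BilinForm

variable {M ι : Type*} [AddCommGroup M] [Module ℝ M] [Fintype ι] [DecidableEq ι]
  (B : LinearMap.BilinForm ℝ M) (e : ι → M)

def gram : Matrix ι ι ℝ := Matrix.of fun i j => B (e i) (e j)

/-- `x` minus its `B`-orthogonal projection onto the span of `e`. -/
noncomputable def residual (x : M) : M :=
  x - ∑ i, ((B.gram e)⁻¹ *ᵥ fun j => B (e j) x) i • e i

variable {B e}

theorem apply_residual_eq_zero (hG : IsUnit (B.gram e).det) (j : ι) (x : M) :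
    B (e j) (B.residual e x) = 0 := by
  have hproj : B.gram e *ᵥ (B.gram e)⁻¹ *ᵥ (fun j => B (e j) x) = fun j => B (e j) x := by
    rw [mulVec_mulVec, mul_nonsing_inv _ hG, one_mulVec]
  have hexpand : B (e j) (B.residual e x) =
      B (e j) x - (B.gram e *ᵥ (B.gram e)⁻¹ *ᵥ fun j => B (e j) x) j := by
    simp only [residual, map_sub, map_sum, map_smul, smul_eq_mul, mulVec, dotProduct, gram,
      of_apply, mul_comm]
  rw [hexpand, hproj, sub_self]

theorem apply_residual_residual (hB : B.IsSymm) (hG : IsUnit (B.gram e).det) (x y : M) :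
    B (B.residual e x) (B.residual e y) =
      B x y - (fun i => B (e i) x) ⬝ᵥ (B.gram e)⁻¹ *ᵥ fun i => B (e i) y := by
  conv_lhs => rw [residual]
  rw [sub_left, sum_left]
  simp only [smul_left, apply_residual_eq_zero hG, mul_zero, Finset.sum_const_zero, sub_zero]
  rw [residual, map_sub, map_sum, dotProduct_comm, dotProduct]
  simp only [smul_left, hB.eq x]

theorem dotProduct_inv_mulVec_le (hB : B.IsSymm) (hs : ∀ x, 0 ≤ B x x)
    (hG : IsUnit (B.gram e).det) (x : M) :
    (fun i => B (e i) x) ⬝ᵥ (B.gram e)⁻¹ *ᵥ (fun i => B (e i) x) ≤ B x x := by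
  have := hs (B.residual e x)
  rw [apply_residual_residual hB hG] at this
  linarith

theorem sub_dotProduct_inv_mulVec_sq_le (hB : B.IsSymm) (hs : ∀ x, 0 ≤ B x x)
    (hG : IsUnit (B.gram e).det) (x y : M) :
    (B x y - (fun i => B (e i) x) ⬝ᵥ (B.gram e)⁻¹ *ᵥ fun i => B (e i) y) ^ 2 ≤
      (B x x - (fun i => B (e i) x) ⬝ᵥ (B.gram e)⁻¹ *ᵥ fun i => B (e i) x) *
        (B y y - (fun i => B (e i) y) ⬝ᵥ (B.gram e)⁻¹ *ᵥ fun i => B (e i) y) := by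
  simpa only [apply_residual_residual hB hG] using
    B.apply_sq_le_of_symm hs (isSymm_iff.mp hB) (B.residual e x) (B.residual e y)

end LinearMap.BilinForm

variable {m n : Type*} [Fintype m] [Fintype n]

noncomputable def kernelNoiseForm (K : Matrix m m ℝ) (s : ℝ) :
    LinearMap.BilinForm ℝ ((m → ℝ) × (n → ℝ)) :=
  LinearMap.mk₂ ℝ (fun a b => a.1 ⬝ᵥ K *ᵥ b.1 + s * (a.2 ⬝ᵥ b.2))
    (fun _ _ _ => by simp only [Prod.fst_add, Prod.snd_add, add_dotProduct]; ring)
    (fun _ _ _ => by simp only [Prod.smul_fst, Prod.smul_snd, smul_dotProduct, smul_eq_mul]; ring)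
    (fun _ _ _ => by simp only [Prod.fst_add, Prod.snd_add, mulVec_add, dotProduct_add]; ring)
    (fun _ _ _ => by
      simp only [Prod.smul_fst, Prod.smul_snd, mulVec_smul, dotProduct_smul, smul_eq_mul]; ring)

@[simp]
theorem kernelNoiseForm_apply (K : Matrix m m ℝ) (s : ℝ) (a b : (m → ℝ) × (n → ℝ)) :
    kernelNoiseForm K s a b = a.1 ⬝ᵥ K *ᵥ b.1 + s * (a.2 ⬝ᵥ b.2) := rfl

theorem isSymm_kernelNoiseForm {K : Matrix m m ℝ} (hK : K.IsSymm) (s : ℝ) :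
    (kernelNoiseForm K s : LinearMap.BilinForm ℝ ((m → ℝ) × (n → ℝ))).IsSymm := by
  refine ⟨fun a b => ?_⟩
  rw [kernelNoiseForm_apply, kernelNoiseForm_apply, dotProduct_comm a.2, dotProduct_mulVec,
    ← mulVec_transpose, hK.eq, dotProduct_comm]

theorem kernelNoiseForm_self_nonneg {K : Matrix m m ℝ} (hK : K.PosSemidef) {s : ℝ} (hs : 0 ≤ s)
    (a : (m → ℝ) × (n → ℝ)) : 0 ≤ kernelNoiseForm K s a a := by
  rw [kernelNoiseForm_apply]
  have := hK.dotProduct_mulVec_nonneg a.1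
  simp only [star_trivial] at this
  exact add_nonneg this (mul_nonneg hs (dotProduct_self_star_nonneg a.2))

theorem kernelNoiseForm_inv_smul_self (K : Matrix m m ℝ) {s : ℝ} (hs : s ≠ 0) (x : m → ℝ)
    (u : n → ℝ) :
    kernelNoiseForm K s (x, s⁻¹ • u) (x, s⁻¹ • u) = x ⬝ᵥ K *ᵥ x + s⁻¹ * (u ⬝ᵥ u) := by
  simp only [kernelNoiseForm_apply, smul_dotProduct, dotProduct_smul, smul_eq_mul]
  field_simp

theorem dotProduct_self_le_card_mul_sq {ν : n → ℝ} {ρ : ℝ} (hν : ∀ i, |ν i| ≤ ρ) :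
    ν ⬝ᵥ ν ≤ Fintype.card n * ρ ^ 2 := by
  calc ν ⬝ᵥ ν = ∑ i, |ν i| ^ 2 := by simp only [dotProduct, ← sq, sq_abs]
    _ ≤ ∑ _i : n, ρ ^ 2 :=
      Finset.sum_le_sum fun i _ => pow_le_pow_left₀ (abs_nonneg _) (hν i) 2
    _ = Fintype.card n * ρ ^ 2 := by simp

theorem stmt_0_general (p : ℕ)
    (K : Matrix (Fin (p + 1)) (Fin (p + 1)) ℝ)
    (hK : K.PosSemidef)
    (γ : Fin (p + 1) → ℝ) (b : ℝ)
    (w : Fin (p + 1) → ℝ) (hw : w = K.mulVec γ)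
    (hγ : γ ⬝ᵥ K.mulVec γ ≤ b ^ 2)
    (ρ : ℝ) (hρ : 0 < ρ)
    (ν : Fin p → ℝ) (hν : ∀ i, |ν i| ≤ ρ)
    (Y : Fin p → ℝ) (hY : ∀ i, Y i = w i.castSucc + ν i)
    (P : Matrix (Fin p) (Fin p) ℝ) (hP : ∀ i j, P i j = K i.castSucc j.castSucc)
    (k : Fin p → ℝ) (hk : ∀ i, k i = K i.castSucc (Fin.last p))
    (Ω : Matrix (Fin p) (Fin p) ℝ) (hΩ : Ω = P + ρ ^ 2 • 1)
    (μ σ : ℝ)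
    (hμ : μ = Y ⬝ᵥ Ω⁻¹.mulVec k)
    (hσ : σ = Real.sqrt (K (Fin.last p) (Fin.last p) - k ⬝ᵥ Ω⁻¹.mulVec k)) :
    0 ≤ K (Fin.last p) (Fin.last p) - k ⬝ᵥ Ω⁻¹.mulVec k ∧
    0 ≤ b ^ 2 - Y ⬝ᵥ Ω⁻¹.mulVec Y + p ∧
    |μ - w (Fin.last p)| ≤ Real.sqrt (b ^ 2 - Y ⬝ᵥ Ω⁻¹.mulVec Y + p) * σ := by
  set B : LinearMap.BilinForm ℝ ((Fin (p + 1) → ℝ) × (Fin p → ℝ)) := kernelNoiseForm K (ρ ^ 2)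
  set e : Fin p → (Fin (p + 1) → ℝ) × (Fin p → ℝ) :=
    fun i => (Pi.single i.castSucc 1, Pi.single i 1)
  set t : (Fin (p + 1) → ℝ) × (Fin p → ℝ) := (Pi.single (Fin.last p) 1, 0)
  set f : (Fin (p + 1) → ℝ) × (Fin p → ℝ) := (γ, (ρ ^ 2)⁻¹ • ν)
  have hρ2 : 0 < ρ ^ 2 := by positivity
  have hB : B.IsSymm := isSymm_kernelNoiseForm (isHermitian_iff_isSymm.mp hK.isHermitian) _
  have hs : ∀ x, 0 ≤ B x x := kernelNoiseForm_self_nonneg hK hρ2.le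
  have hgram : B.gram e = Ω := by
    ext i j
    simp [B, e, LinearMap.BilinForm.gram, hΩ, hP, one_apply, Pi.single_apply, eq_comm]
  have hobs_f : (fun i => B (e i) f) = Y := by
    ext i
    simp [B, e, f, hY, hw, mulVec, hρ2.ne']
  have hobs_t : (fun i => B (e i) t) = k := by
    ext i
    simp [B, e, t, hk]
  have hft : B f t = w (Fin.last p) := by
    rw [hB.eq]
    simp [B, t, f, hw]
  have htt : B t t = K (Fin.last p) (Fin.last p) := by simp [B, t]
  have hff : B f f ≤ b ^ 2 + p := by
    have hνν : (ρ ^ 2)⁻¹ * (ν ⬝ᵥ ν) ≤ p := by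
      rw [inv_mul_le_iff₀ hρ2, mul_comm]
      simpa using dotProduct_self_le_card_mul_sq hν
    rw [kernelNoiseForm_inv_smul_self K hρ2.ne']
    linarith
  have hG : IsUnit (B.gram e).det := by
    rw [hgram, hΩ, show P = K.submatrix Fin.castSucc Fin.castSucc from Matrix.ext hP]
    exact (PosDef.posSemidef_add (hK.submatrix _) (PosDef.one.smul hρ2)).det_pos.ne'.isUnit
  have hσ0 := LinearMap.BilinForm.dotProduct_inv_mulVec_le hB hs hG t
  have hY0 := LinearMap.BilinForm.dotProduct_inv_mulVec_le hB hs hG f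
  have hCS := LinearMap.BilinForm.sub_dotProduct_inv_mulVec_sq_le hB hs hG f t
  simp only [hgram, hobs_f, hobs_t, hft, htt] at hσ0 hY0 hCS
  refine ⟨by linarith, by linarith, ?_⟩
  rw [hσ, hμ, abs_sub_comm, ← Real.sqrt_mul (by linarith)]
  exact Real.abs_le_sqrt (hCS.trans (mul_le_mul_of_nonneg_right (by linarith) (by linarith)))

/-- Deterministic GP error bound (Proposition 1) in finite representer form. -/
theorem stmt_0 (p n : ℕ) (hp : 1 ≤ p) (hn : 1 ≤ n)
    (q : (Fin n → ℝ) → (Fin n → ℝ) → ℝ)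
    (hqsymm : ∀ u v, q u v = q v u)
    (z : Fin (p + 1) → (Fin n → ℝ))
    (K : Matrix (Fin (p + 1)) (Fin (p + 1)) ℝ)
    (hKq : ∀ i j, K i j = q (z i) (z j))
    (hK : K.PosSemidef)
    (γ : Fin (p + 1) → ℝ) (b : ℝ) (hb : 0 < b)
    (w : Fin (p + 1) → ℝ) (hw : w = K.mulVec γ)
    (hγ : γ ⬝ᵥ K.mulVec γ ≤ b ^ 2)
    (ρ : ℝ) (hρ : 0 < ρ)
    (ν : Fin p → ℝ) (hν : ∀ i, |ν i| ≤ ρ)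
    (Y : Fin p → ℝ) (hY : ∀ i, Y i = w i.castSucc + ν i)
    (P : Matrix (Fin p) (Fin p) ℝ) (hP : ∀ i j, P i j = K i.castSucc j.castSucc)
    (k : Fin p → ℝ) (hk : ∀ i, k i = K i.castSucc (Fin.last p))
    (Ω : Matrix (Fin p) (Fin p) ℝ) (hΩ : Ω = P + ρ ^ 2 • 1)
    (μ σ : ℝ)
    (hμ : μ = Y ⬝ᵥ Ω⁻¹.mulVec k)
    (hσ : σ = Real.sqrt (K (Fin.last p) (Fin.last p) - k ⬝ᵥ Ω⁻¹.mulVec k)) :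
    0 ≤ K (Fin.last p) (Fin.last p) - k ⬝ᵥ Ω⁻¹.mulVec k ∧
    0 ≤ b ^ 2 - Y ⬝ᵥ Ω⁻¹.mulVec Y + p ∧
    |μ - w (Fin.last p)| ≤ Real.sqrt (b ^ 2 - Y ⬝ᵥ Ω⁻¹.mulVec Y + p) * σ :=
  stmt_0_general p K hK γ b w hw hγ ρ hρ ν hν Y hY P hP k hk Ω hΩ μ σ hμ hσ
end

section
/- Let p ≥ 1, let K ∈ ℝ^{(p+1)×(p+1)} be symmetric positive semidefinite with upper-left p×p block P, let γ ∈ ℝ^{p+1}, set w = Kγ and suppose γᵀKγ ≤ b² for some b > 0. Let ρ > 0, let ν ∈ ℝ^p with |ν_i| ≤ ρ for all i, set Y_i = w_i + ν_i for i = 1,…,p, and let Ω = P + ρ²I_p. Then YᵀΩ⁻¹Y ≤ b² + p; equivalently, the quantity b² − YᵀΩ⁻¹Y + p appearing under the square root in the GP error-bound factor B is nonnegative. -/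
/-!
With `z = Ω⁻¹Y` we have `YᵀΩ⁻¹Y = 2 zᵀY - zᵀΩz`, and both `Y = w|ₚ + ν` and `Ω = P + ρ²I` split
this into a kernel part and a noise part. Extending `z` by zero to `z̃`, the kernel part is
`2 z̃ᵀKγ - z̃ᵀKz̃ = γᵀKγ - (γ - z̃)ᵀK(γ - z̃) ≤ γᵀKγ ≤ b²`. The noise part is a sum over coordinates
of `2 zᵢνᵢ - ρ²zᵢ² ≤ νᵢ²/ρ² ≤ 1`, hence at most `p`.
-/

open Matrix Function

section
variable {m n R : Type*} [Fintype m] [Fintype n] [CommRing R]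

theorem extend_zero_dotProduct {e : m → n} (he : Injective e) (z : m → R) (v : n → R) :
    extend e z 0 ⬝ᵥ v = z ⬝ᵥ (v ∘ e) :=
  (Fintype.sum_of_injective e he _ _
    (fun i hi => by simp [extend_apply' _ _ _ (by simpa using hi)])
    (fun j => by simp [he.extend_apply])).symm

theorem mulVec_extend_zero_comp {e : m → n} (he : Injective e) (K : Matrix n n R) (z : m → R) :
    (K *ᵥ extend e z 0) ∘ e = K.submatrix e e *ᵥ z := by
  ext i
  change K (e i) ⬝ᵥ extend e z 0 = (fun j => K (e i) (e j)) ⬝ᵥ z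
  rw [dotProduct_comm, extend_zero_dotProduct he, dotProduct_comm]
  rfl

theorem Matrix.PosSemidef.two_mul_dotProduct_mulVec_sub_le {K : Matrix n n ℝ} (hK : K.PosSemidef)
    (x y : n → ℝ) : 2 * (x ⬝ᵥ K *ᵥ y) - x ⬝ᵥ K *ᵥ x ≤ y ⬝ᵥ K *ᵥ y := by
  have hsymm : x ⬝ᵥ K *ᵥ y = y ⬝ᵥ K *ᵥ x := by
    rw [dotProduct_mulVec, ← vecMul_transpose, ← conjTranspose_eq_transpose_of_trivial,
      hK.isHermitian.eq, dotProduct_comm]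
  have := hK.dotProduct_mulVec_nonneg (y - x)
  simp only [star_trivial, mulVec_sub, dotProduct_sub, sub_dotProduct] at this
  linarith

theorem Matrix.PosSemidef.two_mul_dotProduct_comp_sub_le {K : Matrix n n ℝ} (hK : K.PosSemidef)
    {e : m → n} (he : Injective e) (z : m → ℝ) (γ : n → ℝ) :
    2 * (z ⬝ᵥ (K *ᵥ γ) ∘ e) - z ⬝ᵥ K.submatrix e e *ᵥ z ≤ γ ⬝ᵥ K *ᵥ γ := by
  rw [← mulVec_extend_zero_comp he, ← extend_zero_dotProduct he, ← extend_zero_dotProduct he]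
  exact hK.two_mul_dotProduct_mulVec_sub_le _ γ

theorem two_mul_dotProduct_sub_sq_mul_dotProduct_self_le_card {ρ : ℝ} (hρ : 0 < ρ) {ν : n → ℝ}
    (hν : ∀ i, |ν i| ≤ ρ) (z : n → ℝ) :
    2 * (z ⬝ᵥ ν) - ρ ^ 2 * (z ⬝ᵥ z) ≤ Fintype.card n := by
  have hcoord : ∀ i, 2 * (z i * ν i) - ρ ^ 2 * (z i * z i) ≤ 1 := fun i => by
    have hνi : ν i ^ 2 ≤ ρ ^ 2 := sq_le_sq' (abs_le.mp (hν i)).1 (abs_le.mp (hν i)).2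
    have hρ2 : 0 < ρ ^ 2 := by positivity
    nlinarith [sq_nonneg (ρ ^ 2 * z i - ν i)]
  simpa [dotProduct, Finset.mul_sum, ← Finset.sum_sub_distrib] using
    Finset.sum_le_sum fun i (_ : i ∈ Finset.univ) => hcoord i

theorem dotProduct_inv_mulVec_eq [DecidableEq n] {Ω : Matrix n n R} (hΩ : IsUnit Ω.det)
    (Y : n → R) :
    Y ⬝ᵥ Ω⁻¹ *ᵥ Y = 2 * (Ω⁻¹ *ᵥ Y ⬝ᵥ Y) - Ω⁻¹ *ᵥ Y ⬝ᵥ Ω *ᵥ Ω⁻¹ *ᵥ Y := by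
  rw [mulVec_mulVec, mul_nonsing_inv _ hΩ, one_mulVec, dotProduct_comm]
  ring

end

theorem stmt_2_general (p : ℕ)
    (K : Matrix (Fin (p + 1)) (Fin (p + 1)) ℝ) (hK : K.PosSemidef)
    (P : Matrix (Fin p) (Fin p) ℝ) (hP : ∀ i j, P i j = K i.castSucc j.castSucc)
    (γ : Fin (p + 1) → ℝ) (b : ℝ)
    (w : Fin (p + 1) → ℝ) (hw : w = K.mulVec γ)
    (hγ : γ ⬝ᵥ K.mulVec γ ≤ b ^ 2)
    (ρ : ℝ) (hρ : 0 < ρ)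
    (ν : Fin p → ℝ) (hν : ∀ i, |ν i| ≤ ρ)
    (Y : Fin p → ℝ) (hY : ∀ i, Y i = w i.castSucc + ν i)
    (Ω : Matrix (Fin p) (Fin p) ℝ) (hΩ : Ω = P + ρ ^ 2 • 1) :
    Y ⬝ᵥ Ω⁻¹.mulVec Y ≤ b ^ 2 + p := by
  have hPsub : P = K.submatrix Fin.castSucc Fin.castSucc := Matrix.ext hP
  have hΩpd : Ω.PosDef := by
    rw [hΩ, hPsub]
    exact PosDef.posSemidef_add (hK.submatrix _) (PosDef.one.smul (by positivity))
  rw [dotProduct_inv_mulVec_eq ((isUnit_iff_isUnit_det _).mp hΩpd.isUnit)]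
  set z := Ω⁻¹ *ᵥ Y
  have hzY : z ⬝ᵥ Y = z ⬝ᵥ (K *ᵥ γ) ∘ Fin.castSucc + z ⬝ᵥ ν := by
    rw [← dotProduct_add]
    congr 1
    ext i
    simp [hY, hw]
  have hzΩz : z ⬝ᵥ Ω *ᵥ z = z ⬝ᵥ P *ᵥ z + ρ ^ 2 * (z ⬝ᵥ z) := by
    rw [hΩ, add_mulVec, dotProduct_add, smul_mulVec, one_mulVec, dotProduct_smul, smul_eq_mul]
  have hker := hK.two_mul_dotProduct_comp_sub_le (Fin.castSucc_injective p) z γ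
  have hnoise := two_mul_dotProduct_sub_sq_mul_dotProduct_self_le_card hρ hν z
  rw [Fintype.card_fin] at hnoise
  rw [← hPsub] at hker
  linarith

/-- Well-definedness of the GP error-bound factor `B`: under the representer
form of the RKHS-norm bound and sup-norm bounded noise, `YᵀΩ⁻¹Y ≤ b² + p`. -/
theorem stmt_2 (p : ℕ) (hp : 1 ≤ p)
    (K : Matrix (Fin (p + 1)) (Fin (p + 1)) ℝ) (hK : K.PosSemidef)
    (P : Matrix (Fin p) (Fin p) ℝ) (hP : ∀ i j, P i j = K i.castSucc j.castSucc)
    (γ : Fin (p + 1) → ℝ) (b : ℝ) (hb : 0 < b)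
    (w : Fin (p + 1) → ℝ) (hw : w = K.mulVec γ)
    (hγ : γ ⬝ᵥ K.mulVec γ ≤ b ^ 2)
    (ρ : ℝ) (hρ : 0 < ρ)
    (ν : Fin p → ℝ) (hν : ∀ i, |ν i| ≤ ρ)
    (Y : Fin p → ℝ) (hY : ∀ i, Y i = w i.castSucc + ν i)
    (Ω : Matrix (Fin p) (Fin p) ℝ) (hΩ : Ω = P + ρ ^ 2 • 1) :
    Y ⬝ᵥ Ω⁻¹.mulVec Y ≤ b ^ 2 + p :=
  stmt_2_general p K hK P hP γ b w hw hγ ρ hρ ν hν Y hY Ω hΩ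
end

section
/- Let q : ℝⁿ × ℝⁿ → ℝ be a symmetric kernel all of whose Gram matrices are positive semidefinite, let ρ > 0, and for a tuple X = (x₁,…,x_p) of points in ℝⁿ write P(X) for the p×p Gram matrix with entries P(X)_{ij} = q(x_i, x_j), Q(x,X) = (q(x,x₁),…,q(x,x_p))ᵀ ∈ ℝ^p, and Ω(X) = P(X) + ρ²I_p (which is positive definite, hence invertible). Let X = (x₁,…,x_p), let l ∈ {1,…,p}, let x ∈ ℝⁿ, let X̲ be X with entry l deleted, and let X⁺ be X̲ with x appended as the last entry. Set Σ = Ω(X)⁻¹, Σ̲ = Σ_{¬l,¬l} − (1/Σ_{ll}) Σ_{¬l,l} Σ_{¬l,l}ᵀ, ζ = Σ̲ Q(x, X̲), and τ = q(x,x) − Q(x,X̲)ᵀ ζ + ρ². Then τ > 0 and the block matrix [[Σ̲ + (1/τ) ζζᵀ, −(1/τ) ζ],[−(1/τ) ζᵀ, 1/τ]] equals Ω(X⁺)⁻¹. -/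
/-!
Deleting row and column `l` from `Σ Ω(X) = 1` leaves, on the remaining indices, the identity up
to the rank-one error `Σ_{¬l,l} Ω(X)_{l,¬l}`; the `l`-th row of the same identity expresses that
error through `Σ_{l,¬l}`, so `Σ̲` inverts `Ω(X̲)`. The matrix `Ω(X⁺)` is `Ω(X̲)` bordered by
`Q(x, X̲)` and `q(x,x) + ρ²`, whose inverse is the Schur-complement formula with complement `τ`;
and `τ = vᵀ Ω(X⁺) v > 0` for `v = (-ζ, 1)`.
-/

open Matrix

namespace Matrix

variable {α : Type*} {p : ℕ}

/-- The block matrix `[[M, b], [cᵀ, d]]`, the new row and column having index `Fin.last p`. -/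
def bordered (M : Matrix (Fin p) (Fin p) α) (b c : Fin p → α) (d : α) :
    Matrix (Fin (p + 1)) (Fin (p + 1)) α :=
  of fun i j => Fin.lastCases (Fin.lastCases d c j) (fun i' => Fin.lastCases (b i') (M i') j) i

section Entries

variable (M : Matrix (Fin p) (Fin p) α) (b c : Fin p → α) (d : α)

@[simp] lemma bordered_castSucc_castSucc (i j : Fin p) :
    bordered M b c d i.castSucc j.castSucc = M i j := by simp [bordered]

@[simp] lemma bordered_castSucc_last (i : Fin p) :
    bordered M b c d i.castSucc (Fin.last p) = b i := by simp [bordered]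

@[simp] lemma bordered_last_castSucc (j : Fin p) :
    bordered M b c d (Fin.last p) j.castSucc = c j := by simp [bordered]

@[simp] lemma bordered_last_last : bordered M b c d (Fin.last p) (Fin.last p) = d := by
  simp [bordered]

end Entries

@[simp] lemma bordered_one [Zero α] [One α] :
    bordered (1 : Matrix (Fin p) (Fin p) α) 0 0 1 = 1 := by
  ext i j
  induction i using Fin.lastCases <;> induction j using Fin.lastCases <;>
    simp [one_apply, Fin.castSucc_ne_last, (Fin.castSucc_ne_last _).symm]

lemma bordered_mul [CommSemiring α] (M M' : Matrix (Fin p) (Fin p) α) (b c b' c' : Fin p → α)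
    (d d' : α) :
    bordered M b c d * bordered M' b' c' d' =
      bordered (M * M' + vecMulVec b c') (M *ᵥ b' + d' • b) (c ᵥ* M' + d • c')
        (c ⬝ᵥ b' + d * d') := by
  ext i j
  induction i using Fin.lastCases <;> induction j using Fin.lastCases <;>
    simp [mul_apply, Fin.sum_univ_castSucc, mulVec, vecMul, dotProduct, vecMulVec_apply,
      mul_comm]

lemma bordered_mulVec_snoc [CommSemiring α] (M : Matrix (Fin p) (Fin p) α) (b c w : Fin p → α)
    (d t : α) :
    bordered M b c d *ᵥ Fin.snoc w t = Fin.snoc (M *ᵥ w + t • b) (c ⬝ᵥ w + d * t) := by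
  ext i
  induction i using Fin.lastCases <;>
    simp [mulVec, dotProduct, Fin.sum_univ_castSucc, mul_comm]

lemma snoc_dotProduct_snoc [CommSemiring α] (v w : Fin p → α) (s t : α) :
    (Fin.snoc v s : Fin (p + 1) → α) ⬝ᵥ Fin.snoc w t = v ⬝ᵥ w + s * t := by
  simp [dotProduct, Fin.sum_univ_castSucc]

lemma sum_mul_succAbove [NonUnitalNonAssocRing α] {S A : Matrix (Fin (p + 1)) (Fin (p + 1)) α}
    (l i j : Fin (p + 1)) :
    ∑ k : Fin p, S i (l.succAbove k) * A (l.succAbove k) j = (S * A) i j - S i l * A l j := by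
  rw [mul_apply, Fin.sum_univ_succAbove _ l, add_sub_cancel_left]

variable {K : Type*} [Field K]

theorem bordered_inv_mul_bordered {S A : Matrix (Fin p) (Fin p) K} (hSA : S * A = 1)
    {b c ζ η : Fin p → K} {d τ : K} (hζ : ζ = S *ᵥ b) (hη : η = c ᵥ* S)
    (hτ : τ = d - c ⬝ᵥ ζ) (hτ0 : τ ≠ 0) :
    bordered (S + τ⁻¹ • vecMulVec ζ η) (-τ⁻¹ • ζ) (-τ⁻¹ • η) τ⁻¹ * bordered A b c d = 1 := by
  have hηA : η ᵥ* A = c := by rw [hη, vecMul_vecMul, hSA, vecMul_one]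
  have hηb : η ⬝ᵥ b = c ⬝ᵥ ζ := by rw [hη, hζ, dotProduct_mulVec]
  rw [bordered_mul, ← bordered_one]
  congr 1
  · rw [add_mul, hSA, smul_mul, vecMulVec_mul, hηA, add_assoc, ← smul_vecMulVec,
      ← add_vecMulVec, neg_smul, add_neg_cancel, zero_vecMulVec, add_zero]
  · rw [add_mulVec, smul_mulVec, ← hζ, vecMulVec_mulVec, hηb]
    ext i
    simp only [Pi.add_apply, Pi.smul_apply, smul_eq_mul, op_smul_eq_mul, Pi.zero_apply]
    field_simp
    rw [hτ]
    ring
  · rw [smul_vecMul, hηA, neg_smul, neg_add_cancel]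
  · rw [smul_dotProduct, hηb, smul_eq_mul]
    field_simp
    rw [hτ]
    ring

/-- The paper's `Σ̲`, with the row of `S` through `l` in place of the column (they agree for
symmetric `S`). -/
def downdate (S : Matrix (Fin (p + 1)) (Fin (p + 1)) K) (l : Fin (p + 1)) :
    Matrix (Fin p) (Fin p) K :=
  S.submatrix l.succAbove l.succAbove -
    (S l l)⁻¹ • vecMulVec (fun i => S (l.succAbove i) l) (fun j => S l (l.succAbove j))

theorem downdate_mul_submatrix {S A : Matrix (Fin (p + 1)) (Fin (p + 1)) K} (hSA : S * A = 1)
    {l : Fin (p + 1)} (hl : S l l ≠ 0) :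
    downdate S l * A.submatrix l.succAbove l.succAbove = 1 := by
  ext i j
  have hrow := sum_mul_succAbove (S := S) (A := A) l (l.succAbove i) (l.succAbove j)
  have hpivot := sum_mul_succAbove (S := S) (A := A) l l (l.succAbove j)
  simp only [hSA, one_apply, Fin.succAbove_right_inj, (Fin.succAbove_ne l j).symm, if_false]
    at hrow hpivot
  simp only [mul_apply, downdate, sub_apply, smul_apply, submatrix_apply, vecMulVec_apply,
    smul_eq_mul, sub_mul, Finset.sum_sub_distrib, hrow, mul_assoc, ← Finset.mul_sum, hpivot,
    one_apply]
  field_simp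
  ring

theorem sub_dotProduct_pos_of_posDef_bordered {A : Matrix (Fin p) (Fin p) ℝ} {b ζ : Fin p → ℝ}
    {d : ℝ} (h : (bordered A b b d).PosDef) (hζ : A *ᵥ ζ = b) : 0 < d - b ⬝ᵥ ζ := by
  have hv : (Fin.snoc (-ζ) 1 : Fin (p + 1) → ℝ) ≠ 0 := fun h0 => by
    simpa using congrFun h0 (Fin.last p)
  have := h.dotProduct_mulVec_pos hv
  rwa [bordered_mulVec_snoc, star_trivial, mulVec_neg, hζ, one_smul, neg_add_cancel,
    snoc_dotProduct_snoc, dotProduct_zero, zero_add, one_mul, dotProduct_neg, mul_one,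
    ← sub_eq_neg_add] at this

end Matrix

section RegularizedGram

variable {E R : Type*} [Semiring R] (q : E → E → R) (r : R)

/-- The paper's `Ω`, for `r = ρ²`. -/
def regularizedGram {ι : Type*} [DecidableEq ι] (z : ι → E) : Matrix ι ι R :=
  of (fun i j => q (z i) (z j)) + r • 1

lemma isSymm_regularizedGram {ι : Type*} [DecidableEq ι] (hq : ∀ u v, q u v = q v u)
    (z : ι → E) : (regularizedGram q r z).IsSymm := by
  ext i j
  simp [regularizedGram, hq (z i), one_apply, eq_comm]

lemma regularizedGram_comp {ι κ : Type*} [DecidableEq ι] [DecidableEq κ] (z : ι → E)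
    {f : κ → ι} (hf : Function.Injective f) :
    regularizedGram q r (z ∘ f) = (regularizedGram q r z).submatrix f f := by
  ext i j
  simp [regularizedGram, one_apply, hf.eq_iff]

lemma regularizedGram_snoc {p : ℕ} (hq : ∀ u v, q u v = q v u) (z : Fin p → E) (x : E) :
    regularizedGram q r (Fin.snoc z x) =
      bordered (regularizedGram q r z) (fun i => q x (z i)) (fun j => q x (z j)) (q x x + r) := by
  ext i j
  induction i using Fin.lastCases <;> induction j using Fin.lastCases <;>
    simp [regularizedGram, one_apply, hq x, Fin.castSucc_ne_last, (Fin.castSucc_ne_last _).symm]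

lemma posDef_regularizedGram {ι : Type*} [Fintype ι] [DecidableEq ι] {q : E → E → ℝ}
    {z : ι → E} (hq : (of fun i j => q (z i) (z j)).PosSemidef) {r : ℝ} (hr : 0 < r) :
    (regularizedGram q r z).PosDef :=
  PosDef.posSemidef_add hq (PosDef.one.smul hr)

end RegularizedGram

theorem stmt_5_general (n p : ℕ)
    (q : (Fin n → ℝ) → (Fin n → ℝ) → ℝ)
    (hqsymm : ∀ u v, q u v = q v u)
    (hqpsd : ∀ (m : ℕ) (z : Fin m → (Fin n → ℝ)),
      (Matrix.of fun i j => q (z i) (z j)).PosSemidef)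
    (ρ : ℝ) (hρ : 0 < ρ)
    (X : Fin (p + 1) → (Fin n → ℝ)) (l : Fin (p + 1)) (x : Fin n → ℝ)
    (Xdel : Fin p → (Fin n → ℝ)) (hXdel : Xdel = X ∘ l.succAbove)
    (Xplus : Fin (p + 1) → (Fin n → ℝ)) (hXplus : Xplus = Fin.snoc Xdel x)
    (S : Matrix (Fin (p + 1)) (Fin (p + 1)) ℝ)
    (hS : S = ((Matrix.of fun i j => q (X i) (X j)) + ρ ^ 2 • 1)⁻¹)
    (Sdel : Matrix (Fin p) (Fin p) ℝ)
    (hSdel : Sdel = S.submatrix l.succAbove l.succAbove -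
      (S l l)⁻¹ • vecMulVec (fun i => S (l.succAbove i) l)
        (fun j => S (l.succAbove j) l))
    (ζ : Fin p → ℝ) (hζ : ζ = Sdel.mulVec (fun i => q x (Xdel i)))
    (τ : ℝ) (hτ : τ = q x x - (fun i => q x (Xdel i)) ⬝ᵥ ζ + ρ ^ 2) :
    0 < τ ∧
    (Matrix.of fun i j =>
      Fin.lastCases
        (Fin.lastCases (1 / τ) (fun j' => -(1 / τ) * ζ j') j)
        (fun i' => Fin.lastCases (-(1 / τ) * ζ i')
          (fun j' => Sdel i' j' + (1 / τ) * ζ i' * ζ j') j) i) =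
      ((Matrix.of fun i j => q (Xplus i) (Xplus j)) + ρ ^ 2 • 1)⁻¹ := by
  have hΩ {m : ℕ} (z : Fin m → Fin n → ℝ) : (regularizedGram q (ρ ^ 2) z).PosDef :=
    posDef_regularizedGram (hqpsd m z) (by positivity)
  have hSA : S * regularizedGram q (ρ ^ 2) X = 1 :=
    hS ▸ nonsing_inv_mul _ (hΩ X).det_pos.ne'.isUnit
  have hSdelA : Sdel * regularizedGram q (ρ ^ 2) Xdel = 1 := by
    have hSsymm : S.IsSymm := hS ▸ (isSymm_regularizedGram q _ hqsymm X).inv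
    rw [hXdel, regularizedGram_comp q _ X (Fin.succAbove_right_injective), hSdel]
    have hrow : (fun j => S (l.succAbove j) l) = fun j => S l (l.succAbove j) :=
      funext fun j => hSsymm.apply l _
    nth_rw 2 [hrow]
    exact downdate_mul_submatrix hSA (hS ▸ (hΩ X).inv).diag_pos.ne'
  set u := fun i => q x (Xdel i)
  have hζ' : ζ = u ᵥ* Sdel := by
    rw [hζ, ← mulVec_transpose, (inv_eq_left_inv hSdelA).symm,
      (isSymm_regularizedGram q _ hqsymm Xdel).inv.eq]
  have hplus : regularizedGram q (ρ ^ 2) Xplus =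
      bordered (regularizedGram q (ρ ^ 2) Xdel) u u (q x x + ρ ^ 2) :=
    hXplus ▸ regularizedGram_snoc q _ hqsymm Xdel x
  have hτ' : τ = q x x + ρ ^ 2 - u ⬝ᵥ ζ := by rw [hτ]; ring
  have hτpos : 0 < τ := hτ' ▸ sub_dotProduct_pos_of_posDef_bordered (hplus ▸ hΩ Xplus)
    (by rw [hζ, mulVec_mulVec, mul_eq_one_comm.mp hSdelA, one_mulVec])
  refine ⟨hτpos, ?_⟩
  change _ = (regularizedGram q (ρ ^ 2) Xplus)⁻¹
  rw [hplus, inv_eq_left_inv (bordered_inv_mul_bordered hSdelA hζ hζ' hτ' hτpos.ne')]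
  ext i j
  induction i using Fin.lastCases <;> induction j using Fin.lastCases <;>
    simp [vecMulVec_apply, mul_assoc]

/-- Single-step correctness of the recursive update of the inverted regularized
Gram matrix (the Σ-part of Proposition 2): removing point `l` and appending the
new point `x`, the inverse `Ω(X⁺)⁻¹` is obtained from `Σ = Ω(X)⁻¹` via the
downdate formula, the Schur scalar `τ` and the vector `ζ`; moreover `τ > 0`. -/
theorem stmt_5 (n p : ℕ) (hp : 1 ≤ p)
    (q : (Fin n → ℝ) → (Fin n → ℝ) → ℝ)
    (hqsymm : ∀ u v, q u v = q v u)
    (hqpsd : ∀ (m : ℕ) (z : Fin m → (Fin n → ℝ)),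
      (Matrix.of fun i j => q (z i) (z j)).PosSemidef)
    (ρ : ℝ) (hρ : 0 < ρ)
    (X : Fin (p + 1) → (Fin n → ℝ)) (l : Fin (p + 1)) (x : Fin n → ℝ)
    (Xdel : Fin p → (Fin n → ℝ)) (hXdel : Xdel = X ∘ l.succAbove)
    (Xplus : Fin (p + 1) → (Fin n → ℝ)) (hXplus : Xplus = Fin.snoc Xdel x)
    (S : Matrix (Fin (p + 1)) (Fin (p + 1)) ℝ)
    (hS : S = ((Matrix.of fun i j => q (X i) (X j)) + ρ ^ 2 • 1)⁻¹)
    (Sdel : Matrix (Fin p) (Fin p) ℝ)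
    (hSdel : Sdel = S.submatrix l.succAbove l.succAbove -
      (S l l)⁻¹ • vecMulVec (fun i => S (l.succAbove i) l)
        (fun j => S (l.succAbove j) l))
    (ζ : Fin p → ℝ) (hζ : ζ = Sdel.mulVec (fun i => q x (Xdel i)))
    (τ : ℝ) (hτ : τ = q x x - (fun i => q x (Xdel i)) ⬝ᵥ ζ + ρ ^ 2) :
    0 < τ ∧
    (Matrix.of fun i j =>
      Fin.lastCases
        (Fin.lastCases (1 / τ) (fun j' => -(1 / τ) * ζ j') j)
        (fun i' => Fin.lastCases (-(1 / τ) * ζ i')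
          (fun j' => Sdel i' j' + (1 / τ) * ζ i' * ζ j') j) i) =
      ((Matrix.of fun i j => q (Xplus i) (Xplus j)) + ρ ^ 2 • 1)⁻¹ :=
  stmt_5_general n p q hqsymm hqpsd ρ hρ X l x Xdel hXdel Xplus hXplus S hS Sdel hSdel ζ hζ τ hτ
end

section
/- Let m ≥ 1, let H ∈ ℝ^{m×m} be symmetric positive definite, let β > 0, u_d ∈ ℝᵐ, a ∈ ℝᵐ, and s, c₀ ∈ ℝ, and assume (a, s) ≠ (0, 0). Define ε = aᵀH⁻¹a + s²/β (which is positive), ω = c₀ + aᵀu_d, λ_* = −ω/ε if ω < 0 and λ_* = 0 if ω ≥ 0, u_* = u_d + λ_* H⁻¹a, and δ_* = λ_* s / β. Then c₀ + aᵀu_* + s δ_* ≥ 0, and for every (û, δ̂) ∈ ℝᵐ × ℝ with (û, δ̂) ≠ (u_*, δ_*) and c₀ + aᵀû + s δ̂ ≥ 0, one has (1/2)(û − u_d)ᵀH(û − u_d) + (β/2) δ̂² > (1/2)(u_* − u_d)ᵀH(u_* − u_d) + (β/2) δ_*². -/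
/-!
The closed-form pair satisfies the KKT conditions with multiplier `λ⋆ ≥ 0`: stationarity
`H (u⋆ - u_d) = λ⋆ a`, `β δ⋆ = λ⋆ s`, and complementary slackness `λ⋆ ψ(u⋆, δ⋆) = 0`, since
`ψ(u⋆, δ⋆) = ω + λ⋆ ε = max ω 0`. Stationarity makes the cost split exactly as
`J̄(u⋆ + v, δ⋆ + e) = J̄(u⋆, δ⋆) + λ⋆ (aᵀv + s e) + ½ vᵀHv + ½ β e²`, and by complementary
slackness the middle term equals `λ⋆ ψ(u⋆ + v, δ⋆ + e) ≥ 0` at feasible points, while the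
last two terms are positive unless `(v, e) = 0`.
-/

open Matrix

noncomputable def kktMultiplier (ω ε : ℝ) : ℝ := if ω < 0 then -ω / ε else 0

lemma kktMultiplier_nonneg (ω : ℝ) {ε : ℝ} (hε : 0 < ε) : 0 ≤ kktMultiplier ω ε := by
  unfold kktMultiplier
  split_ifs with hω
  · exact div_nonneg (by linarith) hε.le
  · exact le_rfl

lemma add_kktMultiplier_mul (ω : ℝ) {ε : ℝ} (hε : 0 < ε) :
    ω + kktMultiplier ω ε * ε = max ω 0 := by
  unfold kktMultiplier
  split_ifs with hω
  · rw [div_mul_cancel₀ _ hε.ne', add_neg_cancel, max_eq_right hω.le]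
  · rw [zero_mul, add_zero, max_eq_left (not_lt.mp hω)]

lemma kktMultiplier_mul_max (ω ε : ℝ) : kktMultiplier ω ε * max ω 0 = 0 := by
  unfold kktMultiplier
  split_ifs with hω
  · rw [max_eq_right hω.le, mul_zero]
  · rw [zero_mul]

section CBF

variable {ι : Type*} [Fintype ι]

noncomputable def cbfCost (H : Matrix ι ι ℝ) (β : ℝ) (ud u : ι → ℝ) (δ : ℝ) : ℝ :=
  (1 / 2) * ((u - ud) ⬝ᵥ H *ᵥ (u - ud)) + (β / 2) * δ ^ 2

def cbfConstraint (c₀ : ℝ) (a : ι → ℝ) (s : ℝ) (u : ι → ℝ) (δ : ℝ) : ℝ :=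
  c₀ + a ⬝ᵥ u + s * δ

lemma dotProduct_mulVec_add_add_of_mulVec_eq {H : Matrix ι ι ℝ} (hH : H.IsHermitian)
    {x g : ι → ℝ} (hx : H *ᵥ x = g) (v : ι → ℝ) :
    (x + v) ⬝ᵥ H *ᵥ (x + v) = x ⬝ᵥ H *ᵥ x + 2 * (g ⬝ᵥ v) + v ⬝ᵥ H *ᵥ v := by
  have hsymm : v ⬝ᵥ H *ᵥ x = x ⬝ᵥ H *ᵥ v := by
    rw [dotProduct_mulVec, ← mulVec_transpose, ← conjTranspose_eq_transpose_of_trivial,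
      hH.eq, dotProduct_comm]
  rw [mulVec_add, dotProduct_add, add_dotProduct, add_dotProduct, ← hsymm, hx,
    dotProduct_comm v g]
  ring

lemma cbfCost_add_of_stationary {H : Matrix ι ι ℝ} (hH : H.IsHermitian) {β lam s : ℝ}
    {a ud u : ι → ℝ} {δ : ℝ} (hu : H *ᵥ (u - ud) = lam • a) (hδ : β * δ = lam * s)
    (v : ι → ℝ) (e : ℝ) :
    cbfCost H β ud (u + v) (δ + e) =
      cbfCost H β ud u δ + lam * (a ⬝ᵥ v + s * e) + cbfCost H β 0 v e := by
  have hquad := dotProduct_mulVec_add_add_of_mulVec_eq hH hu v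
  rw [smul_dotProduct, smul_eq_mul] at hquad
  simp only [cbfCost, sub_zero, add_sub_right_comm u v ud, hquad]
  linear_combination e * hδ

lemma cbfCost_zero_pos {H : Matrix ι ι ℝ} (hH : H.PosDef) {β : ℝ} (hβ : 0 < β)
    {v : ι → ℝ} {e : ℝ} (hve : (v, e) ≠ 0) : 0 < cbfCost H β 0 v e := by
  have hv : 0 ≤ v ⬝ᵥ H *ᵥ v := by simpa using hH.posSemidef.dotProduct_mulVec_nonneg v
  simp only [cbfCost, sub_zero]
  rcases eq_or_ne v 0 with rfl | hv0
  · have he : e ≠ 0 := fun he ↦ hve (by rw [he]; rfl)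
    have : 0 < β * e ^ 2 := by positivity
    linarith
  · have : 0 < v ⬝ᵥ H *ᵥ v := by simpa using hH.dotProduct_mulVec_pos hv0
    have : 0 ≤ β * e ^ 2 := by positivity
    linarith

theorem cbfCost_lt_of_kkt {H : Matrix ι ι ℝ} (hH : H.PosDef) {β : ℝ} (hβ : 0 < β)
    {c₀ s lam δ : ℝ} {a ud u : ι → ℝ} (hlam : 0 ≤ lam)
    (hu : H *ᵥ (u - ud) = lam • a) (hδ : β * δ = lam * s)
    (hslack : lam * cbfConstraint c₀ a s u δ = 0)
    {u' : ι → ℝ} {δ' : ℝ} (hne : (u', δ') ≠ (u, δ)) (hfeas : 0 ≤ cbfConstraint c₀ a s u' δ') :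
    cbfCost H β ud u δ < cbfCost H β ud u' δ' := by
  have hdecomp := cbfCost_add_of_stationary hH.isHermitian hu hδ (u' - u) (δ' - δ)
  rw [add_sub_cancel, add_sub_cancel] at hdecomp
  have hgain : 0 ≤ lam * (a ⬝ᵥ (u' - u) + s * (δ' - δ)) := by
    have : lam * (a ⬝ᵥ (u' - u) + s * (δ' - δ)) =
        lam * cbfConstraint c₀ a s u' δ' - lam * cbfConstraint c₀ a s u δ := by
      simp only [cbfConstraint, dotProduct_sub]; ring
    rw [this, hslack, sub_zero]
    exact mul_nonneg hlam hfeas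
  have hpos : 0 < cbfCost H β 0 (u' - u) (δ' - δ) :=
    cbfCost_zero_pos hH hβ (by simpa [sub_eq_zero, Prod.ext_iff] using hne)
  linarith

variable [DecidableEq ι]

lemma dotProduct_inv_mulVec_add_sq_div_pos {H : Matrix ι ι ℝ} (hH : H.PosDef) {β : ℝ}
    (hβ : 0 < β) {a : ι → ℝ} {s : ℝ} (has : ¬(a = 0 ∧ s = 0)) :
    0 < a ⬝ᵥ H⁻¹ *ᵥ a + s ^ 2 / β := by
  have hHa : 0 ≤ a ⬝ᵥ H⁻¹ *ᵥ a := by simpa using hH.inv.posSemidef.dotProduct_mulVec_nonneg a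
  rcases not_and_or.mp has with ha | hs
  · have : 0 < a ⬝ᵥ H⁻¹ *ᵥ a := by simpa using hH.inv.dotProduct_mulVec_pos ha
    positivity
  · have : 0 < s ^ 2 / β := by positivity
    positivity

lemma cbfConstraint_add_smul_inv_mulVec (H : Matrix ι ι ℝ) {β : ℝ} (hβ : β ≠ 0)
    (c₀ s lam : ℝ) (a ud : ι → ℝ) :
    cbfConstraint c₀ a s (ud + lam • H⁻¹ *ᵥ a) (lam * s / β) =
      (c₀ + a ⬝ᵥ ud) + lam * (a ⬝ᵥ H⁻¹ *ᵥ a + s ^ 2 / β) := by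
  simp only [cbfConstraint, dotProduct_add, dotProduct_smul, smul_eq_mul]
  field_simp
  ring

lemma mulVec_add_smul_inv_mulVec_sub {H : Matrix ι ι ℝ} (hH : IsUnit H.det) (lam : ℝ)
    (a ud : ι → ℝ) : H *ᵥ (ud + lam • H⁻¹ *ᵥ a - ud) = lam • a := by
  rw [add_sub_cancel_left, mulVec_smul, mulVec_mulVec, mul_nonsing_inv _ hH, one_mulVec]

end CBF

theorem stmt_10_general (m : ℕ)
    (H : Matrix (Fin m) (Fin m) ℝ) (hH : H.PosDef)
    (β : ℝ) (hβ : 0 < β)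
    (ud a : Fin m → ℝ) (s c₀ : ℝ)
    (hns : ¬(a = 0 ∧ s = 0))
    (ε ω lam : ℝ) (ustar : Fin m → ℝ) (δstar : ℝ)
    (hε : ε = a ⬝ᵥ H⁻¹.mulVec a + s ^ 2 / β)
    (hω : ω = c₀ + a ⬝ᵥ ud)
    (hlam : lam = if ω < 0 then -ω / ε else 0)
    (hust : ustar = ud + lam • H⁻¹.mulVec a)
    (hδst : δstar = lam * s / β) :
    0 < ε ∧
    0 ≤ c₀ + a ⬝ᵥ ustar + s * δstar ∧
    ∀ (uhat : Fin m → ℝ) (δhat : ℝ), (uhat, δhat) ≠ (ustar, δstar) →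
      0 ≤ c₀ + a ⬝ᵥ uhat + s * δhat →
      (1 / 2) * ((ustar - ud) ⬝ᵥ H.mulVec (ustar - ud)) + (β / 2) * δstar ^ 2 <
        (1 / 2) * ((uhat - ud) ⬝ᵥ H.mulVec (uhat - ud)) + (β / 2) * δhat ^ 2 := by
  have hεpos : 0 < ε := hε ▸ dotProduct_inv_mulVec_add_sq_div_pos hH hβ hns
  change lam = kktMultiplier ω ε at hlam
  have hψ : cbfConstraint c₀ a s ustar δstar = max ω 0 := by
    rw [hust, hδst, cbfConstraint_add_smul_inv_mulVec H hβ.ne', ← hε, ← hω, hlam,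
      add_kktMultiplier_mul ω hεpos]
  have hu : H *ᵥ (ustar - ud) = lam • a :=
    hust ▸ mulVec_add_smul_inv_mulVec_sub ((isUnit_iff_isUnit_det H).mp hH.isUnit) lam a ud
  have hδ : β * δstar = lam * s := by rw [hδst, mul_div_cancel₀ _ hβ.ne']
  refine ⟨hεpos, (le_max_right ω 0).trans_eq hψ.symm, fun uhat δhat hne hfeas ↦ ?_⟩
  exact cbfCost_lt_of_kkt hH hβ (hlam ▸ kktMultiplier_nonneg ω hεpos) hu hδ
    (by rw [hψ, hlam, kktMultiplier_mul_max]) hne hfeas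

/-- Theorem 1 at a fixed state: the closed-form safety-filter pair
`(u⋆, δ⋆)` is feasible and is the unique global minimizer of the quadratic
cost subject to the affine CBF constraint. -/
theorem stmt_10 (m : ℕ) (hm : 1 ≤ m)
    (H : Matrix (Fin m) (Fin m) ℝ) (hH : H.PosDef)
    (β : ℝ) (hβ : 0 < β)
    (ud a : Fin m → ℝ) (s c₀ : ℝ)
    (hns : ¬(a = 0 ∧ s = 0))
    (ε ω lam : ℝ) (ustar : Fin m → ℝ) (δstar : ℝ)
    (hε : ε = a ⬝ᵥ H⁻¹.mulVec a + s ^ 2 / β)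
    (hω : ω = c₀ + a ⬝ᵥ ud)
    (hlam : lam = if ω < 0 then -ω / ε else 0)
    (hust : ustar = ud + lam • H⁻¹.mulVec a)
    (hδst : δstar = lam * s / β) :
    0 < ε ∧
    0 ≤ c₀ + a ⬝ᵥ ustar + s * δstar ∧
    ∀ (uhat : Fin m → ℝ) (δhat : ℝ), (uhat, δhat) ≠ (ustar, δstar) →
      0 ≤ c₀ + a ⬝ᵥ uhat + s * δhat →
      (1 / 2) * ((ustar - ud) ⬝ᵥ H.mulVec (ustar - ud)) + (β / 2) * δstar ^ 2 <
        (1 / 2) * ((uhat - ud) ⬝ᵥ H.mulVec (uhat - ud)) + (β / 2) * δhat ^ 2 :=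
  stmt_10_general m H hH β hβ ud a s c₀ hns ε ω lam ustar δstar hε hω hlam hust hδst
end

section
/- Let α : ℝ → ℝ be locally Lipschitz, nondecreasing, and satisfy α(0) = 0. Let T ∈ (0, ∞], let h : [0, T) → ℝ be differentiable with h(0) ≥ 0, and suppose that for all t ∈ [0, T), h′(t) ≥ −α(h(t)). Then h(t) ≥ 0 for all t ∈ [0, T). -/
/-!
On the interval of existence, wherever `h < 0` monotonicity of `α` and `α 0 = 0` give
`h' ≥ -α h ≥ -α 0 = 0`. So if `h` were negative at some `t`, then past the last time `s ≤ t`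
with `h s ≥ 0` the function `h` would be nondecreasing on `[s, t]`, forcing `h t ≥ h s ≥ 0`.
-/

open Set

theorem exists_last_nonneg_of_neg {f : ℝ → ℝ} {a b : ℝ} (hab : a ≤ b)
    (hf : ContinuousOn f (Icc a b)) (ha : 0 ≤ f a) (hb : f b < 0) :
    ∃ s ∈ Ico a b, 0 ≤ f s ∧ ∀ x ∈ Ioc s b, f x < 0 := by
  set K := Icc a b ∩ f ⁻¹' Ici 0
  have hK_closed : IsClosed K := hf.preimage_isClosed_of_isClosed isClosed_Icc isClosed_Ici
  have hK_bdd : BddAbove K := ⟨b, fun x hx => hx.1.2⟩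
  obtain ⟨⟨has, hsb⟩, hs⟩ : sSup K ∈ K :=
    hK_closed.csSup_mem ⟨a, ⟨le_rfl, hab⟩, ha⟩ hK_bdd
  refine ⟨sSup K, ⟨has, hsb.lt_of_ne ?_⟩, hs, fun x hx => ?_⟩
  · rintro hs_eq
    exact (hs_eq ▸ hs).not_gt hb
  · by_contra! hx0
    exact (le_csSup hK_bdd ⟨⟨has.trans hx.1.le, hx.2⟩, hx0⟩).not_gt hx.1

theorem nonneg_of_deriv_nonneg_of_neg {f f' : ℝ → ℝ} {a b : ℝ} (hab : a ≤ b)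
    (hf : ContinuousOn f (Icc a b))
    (hf' : ∀ x ∈ Ioo a b, HasDerivWithinAt f (f' x) (Ioo a b) x)
    (hneg : ∀ x ∈ Ioo a b, f x < 0 → 0 ≤ f' x) (ha : 0 ≤ f a) : 0 ≤ f b := by
  by_contra! hb
  obtain ⟨s, ⟨has, hsb⟩, hs, hlt⟩ := exists_last_nonneg_of_neg hab hf ha hb
  have hIoo : Ioo s b ⊆ Ioo a b := Ioo_subset_Ioo_left has
  have hmono : MonotoneOn f (Icc s b) := by
    refine monotoneOn_of_hasDerivWithinAt_nonneg (f' := f') (convex_Icc s b)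
      (hf.mono (Icc_subset_Icc_left has)) ?_ ?_ <;> rw [interior_Icc]
    · exact fun x hx => (hf' x (hIoo hx)).mono hIoo
    · exact fun x hx => hneg x (hIoo hx) (hlt x (Ioo_subset_Ioc_self hx))
  exact hb.not_ge (hs.trans (hmono (left_mem_Icc.2 hsb.le) (right_mem_Icc.2 hsb.le) hsb.le))

theorem stmt_12_general (α : ℝ → ℝ) (hmono : Monotone α)
    (hα0 : α 0 = 0) (T : EReal)
    (h h' : ℝ → ℝ) (hh0 : 0 ≤ h 0)
    (hderiv : ∀ t ∈ {t : ℝ | 0 ≤ t ∧ (t : EReal) < T},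
      HasDerivWithinAt h (h' t) {t : ℝ | 0 ≤ t ∧ (t : EReal) < T} t)
    (hineq : ∀ t ∈ {t : ℝ | 0 ≤ t ∧ (t : EReal) < T}, -α (h t) ≤ h' t) :
    ∀ t ∈ {t : ℝ | 0 ≤ t ∧ (t : EReal) < T}, 0 ≤ h t := by
  rintro t ⟨ht0, htT⟩
  have hsub : Icc 0 t ⊆ {t : ℝ | 0 ≤ t ∧ (t : EReal) < T} := fun x hx =>
    ⟨hx.1, (EReal.coe_le_coe_iff.2 hx.2).trans_lt htT⟩
  refine nonneg_of_deriv_nonneg_of_neg (f' := h') ht0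
    (fun x hx => (hderiv x (hsub hx)).continuousWithinAt.mono hsub)
    (fun x hx => (hderiv x (hsub (Ioo_subset_Icc_self hx))).mono
      (Ioo_subset_Icc_self.trans hsub))
    (fun x hx hx0 => ?_) hh0
  have : α (h x) ≤ 0 := hα0 ▸ hmono hx0.le
  linarith [hineq x (hsub (Ioo_subset_Icc_self hx))]

/-- Comparison-lemma core of Theorem 2 (CBF forward invariance): if
`h(0) ≥ 0` and `h'(t) ≥ -α(h(t))` on `[0, T)` for a locally Lipschitz,
nondecreasing `α` with `α(0) = 0`, then `h(t) ≥ 0` on `[0, T)`. -/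
theorem stmt_12 (α : ℝ → ℝ) (hlip : LocallyLipschitz α) (hmono : Monotone α)
    (hα0 : α 0 = 0) (T : EReal) (hT : 0 < T)
    (h h' : ℝ → ℝ) (hh0 : 0 ≤ h 0)
    (hderiv : ∀ t ∈ {t : ℝ | 0 ≤ t ∧ (t : EReal) < T},
      HasDerivWithinAt h (h' t) {t : ℝ | 0 ≤ t ∧ (t : EReal) < T} t)
    (hineq : ∀ t ∈ {t : ℝ | 0 ≤ t ∧ (t : EReal) < T}, -α (h t) ≤ h' t) :
    ∀ t ∈ {t : ℝ | 0 ≤ t ∧ (t : EReal) < T}, 0 ≤ h t :=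
  stmt_12_general α hmono hα0 T h h' hh0 hderiv hineq
end

section
/- Let ξ : ℝ → ℝ be continuously differentiable with ξ(t) = 0 for all t ≤ 0 and ξ(t) = 1 for all t ≥ 1. Let T > 0 and let (a_k)_{k ≥ −1} be a sequence of real numbers. Define F : [0, ∞) → ℝ by F(t) = ξ((t − kT)/T)·a_k + (1 − ξ((t − kT)/T))·a_{k−1} for t ∈ [kT, (k+1)T), k ∈ ℕ. Then F is continuously differentiable on [0, ∞). -/
/-!
On `[kT, (k+1)T)` the function `F` is the blend `ξ((t - kT)/T) a_k + (1 - ξ((t - kT)/T)) a_{k-1}`,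
which is a globally `C¹` function of `t`, equal to `a_{k-1}` for `t ≤ kT` and to `a_k` for
`t ≥ (k+1)T`. Hence on `((k-1)T, (k+1)T)` the function `F` agrees with the `C¹` function
`blend_{k-1} + blend_k - a_{k-1}`: on `[kT, (k+1)T)` the first summand is the constant `a_{k-1}`,
on `((k-1)T, kT)` the second one is. These open intervals cover `[0, ∞)`.
-/

open Set

section Blend

variable {E : Type*} [NormedAddCommGroup E] [NormedSpace ℝ E]

noncomputable def blend (ξ : ℝ → ℝ) (T : ℝ) (a : ℤ → E) (k : ℤ) (t : ℝ) : E :=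
  ξ ((t - k * T) / T) • a k + (1 - ξ ((t - k * T) / T)) • a (k - 1)

variable {ξ : ℝ → ℝ} {T : ℝ} {a : ℤ → E}

theorem contDiff_blend {n : WithTop ℕ∞} (hξ : ContDiff ℝ n ξ) (k : ℤ) :
    ContDiff ℝ n (blend ξ T a k) := by
  have hξk : ContDiff ℝ n fun t : ℝ => ξ ((t - k * T) / T) :=
    hξ.comp ((contDiff_id.sub contDiff_const).div_const _)
  exact (hξk.smul contDiff_const).add ((contDiff_const.sub hξk).smul contDiff_const)

theorem blend_of_le (hξ0 : ∀ t ≤ (0 : ℝ), ξ t = 0) (hT : 0 < T) {k : ℤ} {t : ℝ}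
    (ht : t ≤ k * T) : blend ξ T a k t = a (k - 1) := by
  have : (t - k * T) / T ≤ 0 := div_nonpos_of_nonpos_of_nonneg (by linarith) hT.le
  simp [blend, hξ0 _ this]

theorem blend_of_ge (hξ1 : ∀ t, (1 : ℝ) ≤ t → ξ t = 1) (hT : 0 < T) {k : ℤ} {t : ℝ}
    (ht : (k + 1) * T ≤ t) : blend ξ T a k t = a k := by
  have : 1 ≤ (t - k * T) / T := by rw [le_div_iff₀ hT]; linarith
  simp [blend, hξ1 _ this]

theorem eqOn_blend_pred_add_blend (hξ0 : ∀ t ≤ (0 : ℝ), ξ t = 0)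
    (hξ1 : ∀ t, (1 : ℝ) ≤ t → ξ t = 1) (hT : 0 < T) {F : ℝ → E}
    (hF : ∀ k : ℕ, EqOn F (blend ξ T a k) (Ico (k * T) ((k + 1) * T))) (k : ℕ) :
    EqOn F (fun t => blend ξ T a (k - 1) t + blend ξ T a k t - a (k - 1))
      (Ici 0 ∩ Ioo ((k - 1) * T) ((k + 1) * T)) := by
  rintro t ⟨ht0, htl, htr⟩
  rcases le_or_gt ((k : ℝ) * T) t with hkt | htk
  · have hpred : blend ξ T a ((k : ℤ) - 1) t = a (k - 1) :=
      blend_of_ge hξ1 hT (by push_cast; linarith)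
    simp only [hF k ⟨hkt, htr⟩, hpred, add_sub_cancel_left]
  · obtain ⟨j, rfl⟩ : ∃ j, k = j + 1 := Nat.exists_eq_add_one.mpr <| by
      have : (0 : ℝ) < k * T := (mem_Ici.mp ht0).trans_lt htk
      exact_mod_cast pos_of_mul_pos_left this hT.le
    have hcur : blend ξ T a ((j : ℤ) + 1) t = a j := by
      rw [blend_of_le hξ0 hT (by push_cast at htk ⊢; linarith), add_sub_cancel_right]
    have hprev : F t = blend ξ T a j t := by
      push_cast at htl htk
      exact hF j ⟨by linarith, by linarith⟩
    simp only [Nat.cast_succ, add_sub_cancel_right, hprev, hcur]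

end Blend

theorem mem_Ico_floor_mul {T t : ℝ} (hT : 0 < T) (ht : 0 ≤ t) :
    t ∈ Ico ((⌊t / T⌋₊ : ℝ) * T) ((⌊t / T⌋₊ + 1) * T) :=
  ⟨(le_div_iff₀ hT).mp (Nat.floor_le (div_nonneg ht hT.le)),
    (div_lt_iff₀ hT).mp (Nat.lt_floor_add_one _)⟩

/-- The blended time-varying model (equations (24)–(25)): gluing consecutive
values `a_{k-1}, a_k` with a `C¹` transition function `ξ` that is `0` on
`(-∞,0]` and `1` on `[1,∞)` over each sampling interval `[kT, (k+1)T)` yields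
a continuously differentiable function on `[0, ∞)`. -/
theorem stmt_14 (ξ : ℝ → ℝ) (hξC1 : ContDiff ℝ 1 ξ)
    (hξ0 : ∀ t ≤ (0 : ℝ), ξ t = 0) (hξ1 : ∀ t, (1 : ℝ) ≤ t → ξ t = 1)
    (T : ℝ) (hT : 0 < T) (a : ℤ → ℝ) (F : ℝ → ℝ)
    (hF : ∀ k : ℕ, ∀ t ∈ Set.Ico ((k : ℝ) * T) (((k : ℝ) + 1) * T),
      F t = ξ ((t - k * T) / T) * a k + (1 - ξ ((t - k * T) / T)) * a (k - 1)) :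
    ContDiffOn ℝ 1 F (Set.Ici 0) := by
  have hF' : ∀ k : ℕ, EqOn F (blend ξ T a k) (Ico (k * T) ((k + 1) * T)) := fun k t ht => by
    simpa [blend] using hF k t ht
  refine contDiffOn_of_locally_contDiffOn fun t ht => ?_
  set k := ⌊t / T⌋₊
  have htk := mem_Ico_floor_mul hT ht
  refine ⟨Ioo ((k - 1) * T) ((k + 1) * T), isOpen_Ioo, ⟨by linarith [htk.1], htk.2⟩, ?_⟩
  exact (((contDiff_blend hξC1 _).add (contDiff_blend hξC1 _)).sub contDiff_const).contDiffOn.congr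
    (eqOn_blend_pred_add_blend hξ0 hξ1 hT hF' k)
end
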